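/- Let m ≥ 3 and let A = (a_{ij}) be an invertible m×m matrix over ℚ satisfying: (a) ∑_{i=1}^m a_{ij₁}² = ∑_{i=1}^m a_{ij₂}² for all column indices j₁, j₂, and (b) a_{i₁j₁}·a_{i₂j₁} = a_{i₁j₂}·a_{i₂j₂} for all i₁ ≠ i₂ and all j₁, j₂. Then there exist a non-zero rational number d, a permutation σ of {1,…,m}, and signs ε_j ∈ {1,−1} such that a_{ij} = d·ε_j if i = σ(j) and a_{ij} = 0 otherwise. -/

import Mathlib

/-!
Condition (b) says that the entrywise product of two distinct rows is a constant vector. If a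
column had nonzero entries in two rows i₁ and i₂, that constant would be nonzero, so row i₁ has no
zero entry; then for any third row i₃, rows i₂ and i₃ are both inversely proportional to row i₁,
hence proportional to each other, contradicting invertibility. So A is a monomial matrix, and by
(a) all its nonzero entries have the same square.
-/

namespace Matrix

variable {n : Type*} [Fintype n] [DecidableEq n]

theorem det_eq_zero_of_row_eq_smul {R : Type*} [CommRing R] {A : Matrix n n R} {i i' : n}
    (hii' : i ≠ i') (c : R) (h : A i = c • A i') : A.det = 0 := by
  rw [← det_updateRow_add_smul_self A hii' (-c), h, neg_smul, add_neg_cancel]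
  exact det_eq_zero_of_row_eq_zero i fun j ↦ by simp

variable {K : Type*} [Field K] {A : Matrix n n K}

theorem eq_zero_or_eq_zero_of_row_mul_row_const (hcard : 3 ≤ Fintype.card n) (hA : A.det ≠ 0)
    (hb : ∀ i₁ i₂ j₁ j₂, i₁ ≠ i₂ → A i₁ j₁ * A i₂ j₁ = A i₁ j₂ * A i₂ j₂)
    {i₁ i₂ : n} (h₁₂ : i₁ ≠ i₂) (j : n) : A i₁ j = 0 ∨ A i₂ j = 0 := by
  by_contra! hne
  have hc : A i₁ j * A i₂ j ≠ 0 := mul_ne_zero hne.1 hne.2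
  have hrow₁ : ∀ j', A i₁ j' ≠ 0 := fun j' h ↦ hc (by rw [← hb i₁ i₂ j' j h₁₂, h, zero_mul])
  have hcard' : ({i₁, i₂} : Finset n).card < Finset.univ.card :=
    Finset.card_le_two.trans_lt (by simpa [Nat.lt_iff_add_one_le] using hcard)
  obtain ⟨i₃, -, hi₃⟩ := Finset.exists_mem_notMem_of_card_lt_card hcard'
  simp only [Finset.mem_insert, Finset.mem_singleton, not_or] at hi₃
  refine hA <| det_eq_zero_of_row_eq_smul hi₃.2 (A i₁ j * A i₃ j / (A i₁ j * A i₂ j))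
    (funext fun j' ↦ ?_)
  apply mul_left_cancel₀ (hrow₁ j')
  rw [Pi.smul_apply, smul_eq_mul, hb i₁ i₃ j' j (Ne.symm hi₃.1), mul_left_comm,
    hb i₁ i₂ j' j h₁₂, div_mul_cancel₀ _ hc]

theorem exists_perm_ne_zero_iff (hA : A.det ≠ 0)
    (hcol : ∀ i₁ i₂ j, i₁ ≠ i₂ → A i₁ j = 0 ∨ A i₂ j = 0) :
    ∃ σ : Equiv.Perm n, ∀ i j, A i j ≠ 0 ↔ i = σ j := by
  have hcol_ne : ∀ j, ∃ i, A i j ≠ 0 := fun j ↦ by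
    by_contra! h
    exact hA (det_eq_zero_of_column_eq_zero j h)
  choose f hf using hcol_ne
  have hsupp : ∀ i j, A i j ≠ 0 ↔ i = f j := fun i j ↦
    ⟨fun h ↦ by_contra fun hi ↦ (hcol i (f j) j hi).elim h (hf j), fun h ↦ h ▸ hf j⟩
  have hsurj : Function.Surjective f := fun i ↦ by
    obtain ⟨j, hj⟩ : ∃ j, A i j ≠ 0 := by
      by_contra! h
      exact hA (det_eq_zero_of_row_eq_zero i h)
    exact ⟨j, ((hsupp i j).1 hj).symm⟩
  exact ⟨Equiv.ofBijective f ⟨Finite.injective_iff_surjective.2 hsurj, hsurj⟩, hsupp⟩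

end Matrix

theorem stmt9 (m : ℕ) (hm : 3 ≤ m) (A : Matrix (Fin m) (Fin m) ℚ)
    (hA : IsUnit A.det)
    (ha : ∀ j₁ j₂ : Fin m, ∑ i, A i j₁ ^ 2 = ∑ i, A i j₂ ^ 2)
    (hb : ∀ i₁ i₂ j₁ j₂ : Fin m, i₁ ≠ i₂ → A i₁ j₁ * A i₂ j₁ = A i₁ j₂ * A i₂ j₂) :
    ∃ (d : ℚ) (σ : Equiv.Perm (Fin m)) (ε : Fin m → ℚ), d ≠ 0 ∧
      (∀ j, ε j = 1 ∨ ε j = -1) ∧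
      ∀ i j, A i j = if i = σ j then d * ε j else 0 := by
  obtain ⟨σ, hσ⟩ := Matrix.exists_perm_ne_zero_iff hA.ne_zero fun i₁ i₂ j h ↦
    Matrix.eq_zero_or_eq_zero_of_row_mul_row_const (by simpa using hm) hA.ne_zero hb h j
  have hzero : ∀ i j, i ≠ σ j → A i j = 0 := fun i j h ↦ not_ne_iff.1 (mt (hσ i j).1 h)
  have hcol_sq : ∀ j, ∑ i, A i j ^ 2 = A (σ j) j ^ 2 := fun j ↦
    Finset.sum_eq_single _ (fun i _ hi ↦ by simp [hzero i j hi]) (by simp)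
  set d := A (σ ⟨0, by omega⟩) ⟨0, by omega⟩
  have hd : d ≠ 0 := (hσ _ _).2 rfl
  refine ⟨d, σ, fun j ↦ A (σ j) j / d, hd, fun j ↦ ?_, fun i j ↦ ?_⟩
  · have : A (σ j) j ^ 2 = d ^ 2 := by rw [← hcol_sq, ← hcol_sq, ha]
    rcases sq_eq_sq_iff_eq_or_eq_neg.1 this with h | h
    · exact .inl (by simp only [h, div_self hd])
    · exact .inr (by simp only [h, neg_div, div_self hd])
  · split_ifs with h
    · rw [h, mul_div_cancel₀ _ hd]
    · exact hzero i j h
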